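/- The bounded continuous functions C_b(X) are dense in C_L(μ) with respect to the seminorm ‖c‖_L = sup_{π ∈ Π(μ)} ∫ |c| dπ. Specifically, for g ∈ C_L(μ), the truncations g_k := max(min(g, k), −k) satisfy ‖g − g_k‖_L → 0 as k → ∞. -/

import Mathlib

/-! Truncating `g` at level `k` only changes it where `|g| > k`, and there the excess
`|g| - k` is at most `∑ i, (hᵢ(xᵢ) - k/n)⁺`. Since every coupling has marginals `μᵢ`, this gives
`‖g - g_k‖_L ≤ ∑ i, ∫ (hᵢ - k/n)⁺ dμᵢ` uniformly in the coupling, and the right-hand side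
tends to `0` by dominated convergence. -/

open MeasureTheory

/-- A coupling of the measures `μ i`. -/
def IsCoupling {ι : Type} [Fintype ι] {X : ι → Type} [∀ i, MeasurableSpace (X i)]
    (μ : ∀ i, Measure (X i)) (π : Measure (∀ i, X i)) : Prop :=
  IsProbabilityMeasure π ∧ ∀ i, π.map (fun x => x i) = μ i

/-- Membership in `C_L(μ)`. -/
def MemCL {ι : Type} [Fintype ι] {X : ι → Type} [∀ i, TopologicalSpace (X i)]
    [∀ i, MeasurableSpace (X i)] (μ : ∀ i, Measure (X i)) (c : (∀ i, X i) → ℝ) : Prop :=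
  Continuous c ∧ ∃ h : ∀ i, X i → ℝ,
    (∀ i, Continuous (h i) ∧ Integrable (h i) (μ i)) ∧
    ∀ x, |c x| ≤ ∑ i, h i (x i)

/-- The seminorm `‖c‖_L`. -/
noncomputable def normL {ι : Type} [Fintype ι] {X : ι → Type} [∀ i, TopologicalSpace (X i)]
    [∀ i, MeasurableSpace (X i)] (μ : ∀ i, Measure (X i)) (c : (∀ i, X i) → ℝ) : ℝ :=
  sSup {r | ∃ π : Measure (∀ i, X i), IsCoupling μ π ∧ r = ∫ x, |c x| ∂π}

open Filter Topology Finset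

lemma abs_sub_max_min_neg_le {a k : ℝ} (hk : 0 ≤ k) :
    |a - max (min a k) (-k)| ≤ max (|a| - k) 0 := by
  grind [abs_le]

lemma max_sum_sub_le_sum_max_sub_div {ι : Type*} [Fintype ι] (b : ι → ℝ) {k : ℝ} (hk : 0 ≤ k) :
    max (∑ i, b i - k) 0 ≤ ∑ i, max (b i - k / Fintype.card ι) 0 := by
  refine max_le ?_ (sum_nonneg fun i _ => le_max_right _ _)
  rcases isEmpty_or_nonempty ι with hι | hι
  · simpa using hk
  calc ∑ i, b i - k = ∑ i, (b i - k / Fintype.card ι) := by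
        rw [sum_sub_distrib, sum_const, card_univ, nsmul_eq_mul, mul_div_cancel₀]
        exact_mod_cast Fintype.card_ne_zero
    _ ≤ ∑ i, max (b i - k / Fintype.card ι) 0 := sum_le_sum fun i _ => le_max_left _ _

lemma abs_sub_max_min_neg_le_sum {ι : Type*} [Fintype ι] {a k : ℝ} {b : ι → ℝ} (hk : 0 ≤ k)
    (hab : |a| ≤ ∑ i, b i) :
    |a - max (min a k) (-k)| ≤ ∑ i, max (b i - k / Fintype.card ι) 0 :=
  calc |a - max (min a k) (-k)| ≤ max (|a| - k) 0 := abs_sub_max_min_neg_le hk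
    _ ≤ max (∑ i, b i - k) 0 := by gcongr
    _ ≤ _ := max_sum_sub_le_sum_max_sub_div b hk

lemma tendsto_integral_max_sub_zero {α : Type*} [MeasurableSpace α] {ν : Measure α} {f : α → ℝ}
    (hf : Integrable f ν) :
    Tendsto (fun t : ℝ => ∫ x, max (f x - t) 0 ∂ν) atTop (𝓝 0) := by
  have hlim : ∀ x, Tendsto (fun t : ℝ => max (f x - t) 0) atTop (𝓝 0) := fun x =>
    tendsto_const_nhds.congr' <| (eventually_ge_atTop (f x)).mono fun t ht =>
      (max_eq_right (by linarith)).symm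
  simpa using tendsto_integral_filter_of_dominated_convergence
    (F := fun t x => max (f x - t) 0) (fun x => |f x|)
    (Eventually.of_forall fun t =>
      (hf.aestronglyMeasurable.sub aestronglyMeasurable_const).sup aestronglyMeasurable_const)
    ((eventually_ge_atTop 0).mono fun t ht => Eventually.of_forall fun x => by
      rw [Real.norm_of_nonneg (le_max_right _ _)]
      exact max_le (by linarith [le_abs_self (f x)]) (abs_nonneg _))
    hf.abs (Eventually.of_forall hlim)

section Coupling

variable {ι : Type} [Fintype ι] {X : ι → Type} [∀ i, MeasurableSpace (X i)]
  {μ : ∀ i, Measure (X i)} {π : Measure (∀ i, X i)}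

lemma IsCoupling.integrable_comp_eval (hπ : IsCoupling μ π) (i : ι) {f : X i → ℝ}
    (hf : Integrable f (μ i)) : Integrable (fun x => f (x i)) π := by
  rw [← hπ.2 i] at hf
  exact hf.comp_measurable (measurable_pi_apply i)

lemma IsCoupling.integral_comp_eval (hπ : IsCoupling μ π) (i : ι) {f : X i → ℝ}
    (hf : AEStronglyMeasurable f (μ i)) : ∫ x, f (x i) ∂π = ∫ y, f y ∂(μ i) := by
  rw [← hπ.2 i] at hf ⊢
  exact (integral_map (measurable_pi_apply i).aemeasurable hf).symm

lemma IsCoupling.integral_abs_sub_max_min_neg_le (hπ : IsCoupling μ π) {g : (∀ i, X i) → ℝ}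
    {h : ∀ i, X i → ℝ} (hh : ∀ i, Integrable (h i) (μ i)) (hgh : ∀ x, |g x| ≤ ∑ i, h i (x i))
    {k : ℝ} (hk : 0 ≤ k) :
    ∫ x, |g x - max (min (g x) k) (-k)| ∂π ≤
      ∑ i, ∫ y, max (h i y - k / Fintype.card ι) 0 ∂(μ i) := by
  have := hπ.1
  set c := k / Fintype.card ι
  have hint : ∀ i, Integrable (fun x => max (h i (x i) - c) 0) π := fun i =>
    ((hπ.integrable_comp_eval i (hh i)).sub (integrable_const c)).pos_part
  calc ∫ x, |g x - max (min (g x) k) (-k)| ∂π ≤ ∫ x, ∑ i, max (h i (x i) - c) 0 ∂π :=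
        integral_mono_of_nonneg (Eventually.of_forall fun x => abs_nonneg _)
          (integrable_finsetSum _ fun i _ => hint i)
          (Eventually.of_forall fun x => abs_sub_max_min_neg_le_sum hk (hgh x))
    _ = ∑ i, ∫ y, max (h i y - c) 0 ∂(μ i) := by
        rw [integral_finsetSum _ fun i _ => hint i]
        refine sum_congr rfl fun i _ => hπ.integral_comp_eval i
          (f := fun y => max (h i y - c) 0) ?_
        exact ((hh i).aestronglyMeasurable.sub aestronglyMeasurable_const).sup
          aestronglyMeasurable_const

end Coupling

section NormL

variable {ι : Type} [Fintype ι] {X : ι → Type} [∀ i, TopologicalSpace (X i)]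
  [∀ i, MeasurableSpace (X i)] (μ : ∀ i, Measure (X i)) (c : (∀ i, X i) → ℝ)

lemma normL_nonneg : 0 ≤ normL μ c :=
  Real.sSup_nonneg <| by
    rintro r ⟨π, -, rfl⟩
    exact integral_nonneg fun x => abs_nonneg _

lemma normL_le {B : ℝ} (hB : 0 ≤ B) (hc : ∀ π, IsCoupling μ π → ∫ x, |c x| ∂π ≤ B) :
    normL μ c ≤ B :=
  Real.sSup_le (by rintro r ⟨π, hπ, rfl⟩; exact hc π hπ) hB

end NormL

theorem truncations_tendsto_normL_general {ι : Type} [Fintype ι] {X : ι → Type}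
    [∀ i, TopologicalSpace (X i)]
    [∀ i, MeasurableSpace (X i)]
    (μ : ∀ i, Measure (X i))
    (g : (∀ i, X i) → ℝ) (hg : MemCL μ g) :
    Filter.Tendsto
      (fun k : ℕ => normL μ (fun x => g x - max (min (g x) (k : ℝ)) (-(k : ℝ))))
      Filter.atTop (nhds 0) := by
  obtain ⟨-, h, hh, hgh⟩ := hg
  have hbound_nonneg (k : ℕ) : 0 ≤ ∑ i, ∫ y, max (h i y - k / Fintype.card ι) 0 ∂(μ i) :=
    sum_nonneg fun i _ => integral_nonneg fun y => le_max_right _ _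
  have hbound : Tendsto (fun k : ℕ => ∑ i, ∫ y, max (h i y - k / Fintype.card ι) 0 ∂(μ i))
      atTop (𝓝 0) := by
    simpa using tendsto_finsetSum univ fun i _ =>
      (tendsto_integral_max_sub_zero (hh i).2).comp <| tendsto_natCast_atTop_atTop.atTop_div_const
        (by exact_mod_cast Fintype.card_pos_iff.mpr ⟨i⟩)
  refine squeeze_zero (fun k => normL_nonneg μ _) (fun k => ?_) hbound
  exact normL_le μ _ (hbound_nonneg k) fun π hπ =>
    hπ.integral_abs_sub_max_min_neg_le (fun i => (hh i).2) hgh k.cast_nonneg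

/-- `C_b(X)` is dense in `C_L(μ)` for the seminorm `‖·‖_L`: the truncations
`g_k = max (min g k) (-k)` (which are bounded continuous) satisfy `‖g - g_k‖_L → 0`. -/
theorem truncations_tendsto_normL {ι : Type} [Fintype ι] {X : ι → Type}
    [∀ i, TopologicalSpace (X i)] [∀ i, PolishSpace (X i)]
    [∀ i, MeasurableSpace (X i)] [∀ i, BorelSpace (X i)]
    (μ : ∀ i, Measure (X i)) (hμ : ∀ i, IsProbabilityMeasure (μ i))
    (g : (∀ i, X i) → ℝ) (hg : MemCL μ g) :
    Filter.Tendsto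
      (fun k : ℕ => normL μ (fun x => g x - max (min (g x) (k : ℝ)) (-(k : ℝ))))
      Filter.atTop (nhds 0) :=
  truncations_tendsto_normL_general μ g hg
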